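/- arXiv:1911.04193 — 2 statements merged into one kernel-verified Lean document; each statement's English description precedes it below -/
import Mathlib

section
/- Let A = M_k(F) ⊕ J be a finite dimensional algebra with involution, where the simple part is M_k(F) with the transpose involution and J = J(A) is the Jacobson radical, decomposed as J = J_{00} ⊕ J_{01} ⊕ J_{10} ⊕ J_{11} as M_k(F)-bimodules with unit of M_k(F) acting as indicated. If A satisfies the *-Capelli polynomial Cap^*_{k(k+1)/2 + 1}[Y,X], then J_{01} = J_{10} = 0. -/
/-!
Let `e = ι 1` and `w ∈ J₀₁`, so that `W = w*` lies in `J₁₀`. Take symmetric matrices `s` and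
matrices `y` with `C = Cap_M(s; y) ≠ 0` in `M_k(F)`, and evaluate `Cap*_{M+1}` at the symmetric
element `w + W` followed by `s`, interspersed with `r, y`. The value splits into a `w`-part and a
`W`-part. Since `M_k(F)` annihilates `w` from the left, only the monomials starting with `w`
survive in the `w`-part, which is therefore `w · rC`. Left multiplication by `e` kills the
`w`-part and fixes the `W`-part, so both vanish. Thus `w` annihilates the two-sided ideal
generated by `C`, which is all of the simple ring `M_k(F)`, and `w = we = 0`.

To find `s` and `y`, enumerate the unordered pairs `{aᵢ, bᵢ}`, let `sᵢ` be the symmetric `0/1`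
matrix supported on `{aᵢ, bᵢ}` and `yᵢ = e_{bᵢ aᵢ₊₁}`: the `(a₀, b_{M-1})` entry of `C` is then
the determinant of the identity matrix.
-/

open Matrix

/-- Product of a list in a (possibly non-unital) ring; the empty product is 0. -/
def ncProd {A : Type} [Mul A] [Zero A] : List A → A
  | [] => 0
  | a :: l => l.foldl (· * ·) a

/-- The m-th Capelli polynomial evaluated at alternating entries `t` and
interspersed entries `x`. -/
def capelli {A : Type} [NonUnitalRing A] (m : ℕ) (t : Fin m → A)
    (x : Fin (m - 1) → A) : A :=
  ∑ σ : Equiv.Perm (Fin m), (Equiv.Perm.sign σ : ℤ) •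
    ncProd (List.ofFn fun i : Fin m =>
      if h : (i : ℕ) < m - 1 then t (σ i) * x ⟨(i : ℕ), h⟩ else t (σ i))

section Capelli

variable {A : Type} [NonUnitalRing A]

lemma mul_ncProd_cons (a b : A) (l : List A) : a * ncProd (b :: l) = ncProd (a * b :: l) := by
  induction l generalizing b with
  | nil => rfl
  | cons c l ih => exact (ih (b * c)).trans (by rw [← mul_assoc]; rfl)

lemma ncProd_cons_cons (a b : A) (l : List A) : ncProd (a :: b :: l) = a * ncProd (b :: l) :=
  (mul_ncProd_cons a b l).symm

/-- The monomial `t₀ x₀ t₁ x₁ ⋯ xₘ₋₂ tₘ₋₁` of the Capelli polynomial. -/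
def capelliMonomial (m : ℕ) (t : Fin m → A) (x : Fin (m - 1) → A) : A :=
  ncProd (List.ofFn fun i : Fin m => if h : (i : ℕ) < m - 1 then t i * x ⟨i, h⟩ else t i)

lemma capelli_eq_sum_capelliMonomial (m : ℕ) (t : Fin m → A) (x : Fin (m - 1) → A) :
    capelli m t x =
      ∑ σ : Equiv.Perm (Fin m), (Equiv.Perm.sign σ : ℤ) • capelliMonomial m (t ∘ σ) x :=
  rfl

@[simp]
lemma capelliMonomial_one (t : Fin 1 → A) (x : Fin 0 → A) : capelliMonomial 1 t x = t 0 := rfl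

lemma capelliMonomial_succ_succ {n : ℕ} (t : Fin (n + 2) → A) (x : Fin (n + 1) → A) :
    capelliMonomial (n + 2) t x =
      t 0 * x 0 * capelliMonomial (n + 1) (Fin.tail t) (Fin.tail x) := by
  simp only [capelliMonomial, List.ofFn_succ]
  rw [ncProd_cons_cons]
  simp [Fin.tail, Fin.succ]

lemma capelliMonomial_update_add {n : ℕ} (t : Fin (n + 1) → A) (x : Fin n → A)
    (i : Fin (n + 1)) (a b : A) :
    capelliMonomial (n + 1) (Function.update t i (a + b)) x =
      capelliMonomial (n + 1) (Function.update t i a) x +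
        capelliMonomial (n + 1) (Function.update t i b) x := by
  induction n with
  | zero => obtain rfl := Fin.fin_one_eq_zero i; simp
  | succ n ih =>
    simp only [capelliMonomial_succ_succ]
    induction i using Fin.cases with
    | zero => simp [Fin.tail_update_zero, add_mul]
    | succ i =>
      simp [Function.update_of_ne (Fin.succ_ne_zero i).symm, Fin.tail_update_succ, ih, mul_add]

lemma mul_capelliMonomial_of_mul_eq {n : ℕ} (t : Fin (n + 1) → A) (x : Fin n → A) {e : A}
    (he : e * t 0 = t 0) : e * capelliMonomial (n + 1) t x = capelliMonomial (n + 1) t x := by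
  cases n with
  | zero => exact he
  | succ n => rw [capelliMonomial_succ_succ, ← mul_assoc, ← mul_assoc, he]

lemma mul_capelliMonomial_eq_zero {n : ℕ} (t : Fin (n + 1) → A) (x : Fin n → A) {a : A}
    (ha : a * t 0 = 0) : a * capelliMonomial (n + 1) t x = 0 := by
  cases n with
  | zero => exact ha
  | succ n => rw [capelliMonomial_succ_succ, ← mul_assoc, ← mul_assoc, ha, zero_mul, zero_mul]

lemma capelliMonomial_eq_zero {n : ℕ} (t : Fin (n + 2) → A) (x : Fin (n + 1) → A)
    (j : Fin (n + 1)) (h : x j * t j.succ = 0) : capelliMonomial (n + 2) t x = 0 := by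
  induction n with
  | zero =>
    obtain rfl := Fin.fin_one_eq_zero j
    rw [capelliMonomial_succ_succ, mul_assoc]
    exact mul_eq_zero_of_right _ (mul_capelliMonomial_eq_zero _ _ h)
  | succ n ih =>
    rw [capelliMonomial_succ_succ]
    induction j using Fin.cases with
    | zero => rw [mul_assoc]; exact mul_eq_zero_of_right _ (mul_capelliMonomial_eq_zero _ _ h)
    | succ j => rw [ih _ _ j h, mul_zero]

lemma map_capelliMonomial {B : Type} [NonUnitalRing B] (φ : A →ₙ+* B) {m : ℕ}
    (t : Fin m → A) (x : Fin (m - 1) → A) :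
    φ (capelliMonomial m t x) = capelliMonomial m (φ ∘ t) (φ ∘ x) := by
  match m with
  | 0 => exact map_zero φ
  | n + 1 =>
    induction n with
    | zero => rfl
    | succ n ih => simp only [capelliMonomial_succ_succ, map_mul, ih]; rfl

lemma map_capelli {B : Type} [NonUnitalRing B] (φ : A →ₙ+* B) (m : ℕ) (t : Fin m → A)
    (x : Fin (m - 1) → A) : φ (capelli m t x) = capelli m (φ ∘ t) (φ ∘ x) := by
  simp only [capelli_eq_sum_capelliMonomial, map_sum, map_zsmul, map_capelliMonomial]
  rfl

lemma capelli_cons_add {m : ℕ} (a b : A) (t : Fin m → A) (x : Fin m → A) :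
    capelli (m + 1) (Fin.cons (a + b) t) x =
      capelli (m + 1) (Fin.cons a t) x + capelli (m + 1) (Fin.cons b t) x := by
  simp only [capelli_eq_sum_capelliMonomial, ← Finset.sum_add_distrib, ← smul_add]
  refine Finset.sum_congr rfl fun σ _ => congrArg _ ?_
  have hcons : ∀ c : A, (Fin.cons c t : Fin (m + 1) → A) ∘ σ =
      Function.update ((Fin.cons 0 t : Fin (m + 1) → A) ∘ σ) (σ.symm 0) c := fun c => by
    rw [← Function.update_comp_equiv, Fin.update_cons_zero]
  rw [hcons (a + b), hcons a, hcons b]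
  exact capelliMonomial_update_add ((Fin.cons 0 t : Fin (m + 1) → A) ∘ σ) x _ a b

lemma mul_capelli_of_mul_eq {n : ℕ} (t : Fin (n + 1) → A) (x : Fin n → A) {e : A}
    (he : ∀ i, e * t i = t i) : e * capelli (n + 1) t x = capelli (n + 1) t x := by
  rw [capelli_eq_sum_capelliMonomial, Finset.mul_sum]
  refine Finset.sum_congr rfl fun σ _ => ?_
  rw [mul_smul_comm, mul_capelliMonomial_of_mul_eq _ _ (he (σ 0))]

lemma capelli_cons_of_mul_eq_zero {n : ℕ} (w : A) (t : Fin (n + 1) → A) (x : Fin (n + 1) → A)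
    (hx : ∀ j, x j * w = 0) :
    capelli (n + 2) (Fin.cons w t) x = w * x 0 * capelli (n + 1) t (Fin.tail x) := by
  rw [capelli_eq_sum_capelliMonomial, capelli_eq_sum_capelliMonomial,
    ← Equiv.sum_comp Equiv.Perm.decomposeFin.symm, Fintype.sum_prod_type,
    Finset.sum_eq_single 0 ?_ (by simp), Finset.mul_sum]
  · refine Finset.sum_congr rfl fun e _ => ?_
    have htail :
        Fin.tail ((Fin.cons w t : Fin (n + 2) → A) ∘ Equiv.Perm.decomposeFin.symm (0, e)) =
          t ∘ e := by
      ext i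
      simp [Fin.tail, Equiv.Perm.decomposeFin_symm_apply_succ]
    rw [Equiv.Perm.decomposeFin.symm_sign, if_pos rfl, capelliMonomial_succ_succ, htail,
      mul_smul_comm]
    simp
  · intro p _ hp
    refine Finset.sum_eq_zero fun e _ => ?_
    set σ := Equiv.Perm.decomposeFin.symm (p, e)
    have hσ : σ.symm 0 ≠ 0 := fun h => hp <|
      (Equiv.Perm.decomposeFin_symm_apply_zero p e).symm.trans ((σ.symm_apply_eq).1 h).symm
    obtain ⟨j, hj⟩ := Fin.exists_succ_eq.2 hσ
    rw [capelliMonomial_eq_zero _ _ j (by simp [hj, hx]), smul_zero]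

end Capelli

section MatrixUnits

variable {ι R : Type} [Fintype ι] [DecidableEq ι] [CommRing R]

lemma mul_single_one_mul_apply (X P : Matrix ι ι R) (a b c d : ι) :
    (X * Matrix.single b c (1 : R) * P) a d = X a b * P c d := by
  simp [Matrix.mul_apply, Matrix.single_apply, ite_and]

lemma capelliMonomial_single_apply {n : ℕ} (M : Fin (n + 1) → Matrix ι ι R)
    (α β : Fin (n + 1) → ι) :
    capelliMonomial (n + 1) M (fun j : Fin n => Matrix.single (β j.castSucc) (α j.succ) (1 : R))
      (α 0) (β (Fin.last n)) = ∏ i, M i (α i) (β i) := by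
  induction n with
  | zero => simp
  | succ n ih =>
    rw [capelliMonomial_succ_succ, mul_single_one_mul_apply, Fin.prod_univ_succ]
    exact congrArg _ (ih (Fin.tail M) (Fin.tail α) (Fin.tail β))

lemma capelli_single_apply {n : ℕ} (s : Fin (n + 1) → Matrix ι ι R)
    (α β : Fin (n + 1) → ι) :
    capelli (n + 1) s (fun j : Fin n => Matrix.single (β j.castSucc) (α j.succ) (1 : R))
      (α 0) (β (Fin.last n)) = (Matrix.of fun i j => s i (α j) (β j)).det := by
  simp only [capelli_eq_sum_capelliMonomial, Matrix.det_apply, Matrix.sum_apply,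
    Matrix.smul_apply, capelliMonomial_single_apply]
  rfl

lemma exists_isSymm_capelli_ne_zero (R ι : Type) [CommRing R] [Nontrivial R]
    [Fintype ι] [DecidableEq ι] {n : ℕ} (hn : Fintype.card (Sym2 ι) = n + 1) :
    ∃ (s : Fin (n + 1) → Matrix ι ι R) (y : Fin n → Matrix ι ι R),
      (∀ i, (s i).IsSymm) ∧ capelli (n + 1) s y ≠ 0 := by
  let e : Fin (n + 1) ≃ Sym2 ι := (Fintype.equivFinOfCardEq hn).symm
  let s : Fin (n + 1) → Matrix ι ι R := fun i =>
    Matrix.of fun p q => if s(p, q) = e i then 1 else 0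
  let α : Fin (n + 1) → ι := fun i => (e i).out.1
  let β : Fin (n + 1) → ι := fun i => (e i).out.2
  refine ⟨s, fun j => Matrix.single (β j.castSucc) (α j.succ) 1,
    fun i => Matrix.IsSymm.ext fun p q => by simp [s, Sym2.eq_swap], fun h => ?_⟩
  have hdet := capelli_single_apply s α β
  have hout : ∀ j, s(α j, β j) = e j := fun j => Quot.out_eq (e j)
  have hone : (Matrix.of fun i j => s i (α j) (β j)) = 1 := by
    ext i j
    simp [s, hout, Matrix.one_apply, e.injective.eq_iff, eq_comm]
  rw [h, hone, Matrix.det_one] at hdet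
  exact zero_ne_one hdet

end MatrixUnits

lemma mul_map_one_eq_zero {R A : Type} [Ring R] [IsSimpleRing R] [NonUnitalRing A]
    (φ : R →ₙ+* A) {w : A} {c : R} (hc : c ≠ 0) (h : ∀ r, w * φ (r * c) = 0) :
    w * φ 1 = 0 := by
  have h1 : (1 : R) ∈ TwoSidedIdeal.span {c} :=
    IsSimpleRing.one_mem_of_ne_zero_mem _ hc (TwoSidedIdeal.subset_span rfl)
  suffices ∀ x ∈ TwoSidedIdeal.span {c}, ∀ r, w * φ (r * x) = 0 by simpa using this 1 h1 1
  intro x hx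
  induction hx using TwoSidedIdeal.span_induction with
  | mem x hx => rw [Set.mem_singleton_iff.1 hx]; exact h
  | zero => simp
  | add x y _ _ hx hy => intro r; rw [mul_add, map_add, mul_add, hx, hy, add_zero]
  | neg x _ hx => intro r; rw [mul_neg, map_neg, mul_neg, hx, neg_zero]
  | left_absorb a x _ hx => intro r; rw [← mul_assoc]; exact hx _
  | right_absorb b x _ hx => intro r; rw [← mul_assoc, map_mul, ← mul_assoc, hx, zero_mul]

lemma mul_map_mul_capelli_eq_zero {R A : Type} [Ring R] [NonUnitalRing A] (φ : R →ₙ+* A)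
    {n : ℕ} (s : Fin (n + 1) → R) (y : Fin n → R) (r : R) {w W : A} (hw : φ 1 * w = 0)
    (hW : φ 1 * W = W)
    (hcap : capelli (n + 2) (Fin.cons (w + W) (φ ∘ s)) (Fin.cons (φ r) (φ ∘ y)) = 0) :
    w * φ (r * capelli (n + 1) s y) = 0 := by
  have hφw : ∀ a, φ a * w = 0 := fun a => by
    rw [← mul_one a, map_mul, mul_assoc, hw, mul_zero]
  set x : Fin (n + 1) → A := Fin.cons (φ r) (φ ∘ y)
  have hP : capelli (n + 2) (Fin.cons w (φ ∘ s)) x = w * φ (r * capelli (n + 1) s y) := by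
    rw [capelli_cons_of_mul_eq_zero w _ x (Fin.cases (hφw r) fun j => hφw (y j)), map_mul,
      map_capelli, ← mul_assoc]
    rfl
  have hφQ : φ 1 * capelli (n + 2) (Fin.cons W (φ ∘ s)) x =
      capelli (n + 2) (Fin.cons W (φ ∘ s)) x :=
    mul_capelli_of_mul_eq _ _ (Fin.cases hW fun j => by simp [← map_mul])
  have hPQ := (capelli_cons_add w W (φ ∘ s) x).symm.trans hcap
  rw [hP] at hPQ
  have hQ : capelli (n + 2) (Fin.cons W (φ ∘ s)) x = 0 := by
    rw [← hφQ, ← add_eq_zero_iff_neg_eq.1 hPQ, mul_neg, ← mul_assoc, hw, zero_mul, neg_zero]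
  rwa [hQ, add_zero] at hPQ

theorem stmt_11_general (F : Type) [Field F] (k : ℕ) (hk : 0 < k)
    (A : Type) [NonUnitalRing A] [Module F A]
    (τ : A →ₗ[F] A)
    (hinv : ∀ a : A, τ (τ a) = a)
    (ι : Matrix (Fin k) (Fin k) F →ₗ[F] A)
    (hιmul : ∀ m m' : Matrix (Fin k) (Fin k) F, ι (m * m') = ι m * ι m')
    (hιτ : ∀ m : Matrix (Fin k) (Fin k) F, τ (ι m) = ι mᵀ)
    (Jm : Fin 2 → Fin 2 → Submodule F A)
    -- the unit of M_k(F) acts on J_{pq} on the left as the identity iff p = 1,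
    -- as zero iff p = 0; similarly on the right with q
    (hleft : ∀ p q : Fin 2, ∀ v ∈ Jm p q, ι 1 * v = if p = 1 then v else 0)
    (hright : ∀ p q : Fin 2, ∀ v ∈ Jm p q, v * ι 1 = if q = 1 then v else 0)
    -- J₀₁* = J₁₀ and J₁₀* = J₀₁
    (hstar01 : ∀ v ∈ Jm 0 1, τ v ∈ Jm 1 0)
    (hstar10 : ∀ v ∈ Jm 1 0, τ v ∈ Jm 0 1)
    -- A satisfies Cap*_{k(k+1)/2 + 1}[Y,X]
    (hcap : ∀ t : Fin (k * (k + 1) / 2 + 1) → A, (∀ i, τ (t i) = t i) →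
      ∀ x : Fin (k * (k + 1) / 2 + 1 - 1) → A,
      capelli (k * (k + 1) / 2 + 1) t x = 0) :
    Jm 0 1 = ⊥ ∧ Jm 1 0 = ⊥ := by
  have : NeZero k := ⟨hk.ne'⟩
  have hcard : Fintype.card (Sym2 (Fin k)) = k * (k + 1) / 2 := by
    rw [Sym2.card, Fintype.card_fin, Nat.choose_two_right, Nat.add_sub_cancel, mul_comm]
  obtain ⟨n, hn⟩ := Nat.exists_eq_add_one.2 (Fintype.card_pos (α := Sym2 (Fin k)))
  rw [← hcard, hn] at hcap
  obtain ⟨s, y, hs, hC⟩ := exists_isSymm_capelli_ne_zero F (Fin k) hn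
  let φ : Matrix (Fin k) (Fin k) F →ₙ+* A :=
    { toFun := ι, map_mul' := hιmul, map_zero' := ι.map_zero, map_add' := ι.map_add }
  have hφ : ⇑φ = ι := rfl
  have h01 : ∀ w ∈ Jm 0 1, w = 0 := by
    intro w hw
    let t : Fin (n + 2) → A := Fin.cons (w + τ w) (φ ∘ s)
    have hτ : ∀ i, τ (t i) = t i :=
      Fin.cases (by simp [t, hinv, add_comm]) fun j => by simp [t, hφ, hιτ, (hs j).eq]
    have key r := mul_map_mul_capelli_eq_zero φ s y r (by simpa [hφ] using hleft 0 1 w hw)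
      (by simpa [hφ] using hleft 1 0 _ (hstar01 w hw)) (hcap _ hτ _)
    have hw1 : w * φ 1 = w := by simpa [hφ] using hright 0 1 w hw
    rw [← hw1, mul_map_one_eq_zero φ hC key]
  refine ⟨(Submodule.eq_bot_iff _).2 h01, (Submodule.eq_bot_iff _).2 fun v hv => ?_⟩
  rw [← hinv v, h01 _ (hstar10 v hv), map_zero]

/-- let A = M_k(F) ⊕ J with the transpose involution on M_k(F) and J
the (nilpotent, *-stable) Jacobson radical, decomposed into M_k(F)-bimodules
J = J₀₀ ⊕ J₀₁ ⊕ J₁₀ ⊕ J₁₁ as indicated.  If A satisfies the *-Capelli polynomial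
Cap*_{k(k+1)/2+1}[Y,X], then J₀₁ = J₁₀ = 0. -/
theorem stmt_11 (F : Type) [Field F] [CharZero F] (k : ℕ) (hk : 0 < k)
    (A : Type) [NonUnitalRing A] [Module F A]
    [SMulCommClass F A A] [IsScalarTower F A A]
    (τ : A →ₗ[F] A)
    (hanti : ∀ a b : A, τ (a * b) = τ b * τ a)
    (hinv : ∀ a : A, τ (τ a) = a)
    (ι : Matrix (Fin k) (Fin k) F →ₗ[F] A)
    (hιmul : ∀ m m' : Matrix (Fin k) (Fin k) F, ι (m * m') = ι m * ι m')
    (hιinj : Function.Injective ι)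
    (hιτ : ∀ m : Matrix (Fin k) (Fin k) F, τ (ι m) = ι mᵀ)
    (Jm : Fin 2 → Fin 2 → Submodule F A)
    -- the unit of M_k(F) acts on J_{pq} on the left as the identity iff p = 1,
    -- as zero iff p = 0; similarly on the right with q
    (hleft : ∀ p q : Fin 2, ∀ v ∈ Jm p q, ι 1 * v = if p = 1 then v else 0)
    (hright : ∀ p q : Fin 2, ∀ v ∈ Jm p q, v * ι 1 = if q = 1 then v else 0)
    -- each J_{pq} is an M_k(F)-bimodule
    (hbimod : ∀ (p q : Fin 2) (m : Matrix (Fin k) (Fin k) F), ∀ v ∈ Jm p q,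
      ι m * v ∈ Jm p q ∧ v * ι m ∈ Jm p q)
    -- J_{pq} J_{il} = 0 for q ≠ i and J_{pq} J_{ql} ⊆ J_{pl}
    (hprod0 : ∀ p q r s : Fin 2, q ≠ r → ∀ v ∈ Jm p q, ∀ w ∈ Jm r s, v * w = 0)
    (hprod : ∀ p q s : Fin 2, ∀ v ∈ Jm p q, ∀ w ∈ Jm q s, v * w ∈ Jm p s)
    -- J₀₁* = J₁₀ and J₁₀* = J₀₁
    (hstar01 : ∀ v ∈ Jm 0 1, τ v ∈ Jm 1 0)
    (hstar10 : ∀ v ∈ Jm 1 0, τ v ∈ Jm 0 1)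
    -- the decomposition A = M_k(F) ⊕ J₀₀ ⊕ J₀₁ ⊕ J₁₀ ⊕ J₁₁ is direct
    (hindep : Jm 0 1 ⊓ Jm 1 0 = ⊥)
    (hdecomp : LinearMap.range ι ⊔ Jm 0 0 ⊔ Jm 0 1 ⊔ Jm 1 0 ⊔ Jm 1 1 = ⊤)
    -- J is nilpotent
    (hnilp : ∃ nn : ℕ, ∀ f : Fin (nn + 1) → A,
      (∀ i, f i ∈ Jm 0 0 ⊔ Jm 0 1 ⊔ Jm 1 0 ⊔ Jm 1 1) → ncProd (List.ofFn f) = 0)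
    -- A satisfies Cap*_{k(k+1)/2 + 1}[Y,X]
    (hcap : ∀ t : Fin (k * (k + 1) / 2 + 1) → A, (∀ i, τ (t i) = t i) →
      ∀ x : Fin (k * (k + 1) / 2 + 1 - 1) → A,
      capelli (k * (k + 1) / 2 + 1) t x = 0) :
    Jm 0 1 = ⊥ ∧ Jm 1 0 = ⊥ :=
  stmt_11_general F k hk A τ hinv ι hιmul hιτ Jm hleft hright hstar01 hstar10 hcap
end

section
/- Suppose q ≥ 1 and nonnegative integers t_1, t_2, t_3 with t_1 + t_2 + t_3 = q, and positive integers k_1,…,k_{t_1}, m_1,…,m_{t_2}, h_1,…,h_{t_3} satisfy k_1^2 + ⋯ + k_{t_1}^2 + (2m_1)^2 + ⋯ + (2m_{t_2})^2 + 2h_1^2 + ⋯ + 2h_{t_3}^2 = k^2 for some k ≥ 1, together with the constraints d^+ + q - 1 ≤ k(k+1)/2 and d^- + q - 1 ≤ k(k-1)/2, where d^+ = Σ k_i(k_i+1)/2 + Σ m_j(2m_j-1) + Σ h_l^2 and d^- = Σ k_i(k_i-1)/2 + Σ m_j(2m_j+1) + Σ h_l^2. Then q = 1, t_1 = 1, t_2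 = t_3 = 0, and k_1 = k. -/
open Finset

lemma tri (n : ℕ) : n * (n + 1) / 2 + n * (n - 1) / 2 = n ^ 2 := by
  rcases n with _ | m
  · simp
  · obtain ⟨a, ha⟩ : Even ((m+1) * ((m+1)+1)) := Nat.even_mul_succ_self (m+1)
    obtain ⟨b, hb⟩ : Even ((m+1) * m) := by
      rw [Nat.mul_comm]; exact Nat.even_mul_succ_self m
    have h1 : (m+1) * ((m+1)+1) / 2 = a := by omega
    have h2 : (m+1) * ((m+1) - 1) / 2 = b := by
      simp only [Nat.add_sub_cancel]; omega
    rw [h1, h2]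
    nlinarith [ha, hb]

lemma no_sqrt2 (h k : ℕ) (hh : 0 < h) : 2 * h ^ 2 ≠ k ^ 2 := by
  intro heq
  have e1 : (2 * h ^ 2).factorization 2 = 1 + 2 * h.factorization 2 := by
    rw [Nat.factorization_mul (by norm_num) (pow_ne_zero 2 hh.ne'),
      Nat.factorization_pow, Nat.Prime.factorization Nat.prime_two]
    simp
  have e2 : (k ^ 2).factorization 2 = 2 * k.factorization 2 := by
    rw [Nat.factorization_pow]; simp
  rw [heq, e2] at e1
  omega

/-- the numerical core of the transpose case. -/
theorem stmt_14 (k q t1 t2 t3 : ℕ) (hk : 1 ≤ k) (hq : 1 ≤ q)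
    (ht : t1 + t2 + t3 = q)
    (ks : Fin t1 → ℕ) (ms : Fin t2 → ℕ) (hs : Fin t3 → ℕ)
    (hks : ∀ i, 0 < ks i) (hms : ∀ j, 0 < ms j) (hhs : ∀ l, 0 < hs l)
    (hsum : (∑ i, (ks i) ^ 2) + (∑ j, (2 * ms j) ^ 2) + (∑ l, 2 * (hs l) ^ 2) = k ^ 2)
    (dplus dminus : ℕ)
    (hdp : dplus = (∑ i, ks i * (ks i + 1) / 2) + (∑ j, ms j * (2 * ms j - 1))
      + (∑ l, (hs l) ^ 2))
    (hdm : dminus = (∑ i, ks i * (ks i - 1) / 2) + (∑ j, ms j * (2 * ms j + 1))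
      + (∑ l, (hs l) ^ 2))
    (h1 : dplus + q - 1 ≤ k * (k + 1) / 2)
    (h2 : dminus + q - 1 ≤ k * (k - 1) / 2) :
    q = 1 ∧ t1 = 1 ∧ t2 = 0 ∧ t3 = 0 ∧ ∀ i, ks i = k := by
  -- dplus + dminus = k^2
  have hdd : dplus + dminus = k ^ 2 := by
    rw [hdp, hdm, ← hsum]
    rw [show ∀ a b c d e f : ℕ, (a + b + c) + (d + e + f) = (a + d) + (b + e) + (c + f)
      from fun a b c d e f => by ring]
    congr 1
    · congr 1
      · rw [← Finset.sum_add_distrib]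
        exact Finset.sum_congr rfl fun i _ => tri (ks i)
      · rw [← Finset.sum_add_distrib]
        refine Finset.sum_congr rfl fun j _ => ?_
        have := hms j
        have h4 : (2 * ms j - 1) + (2 * ms j + 1) = 4 * ms j := by omega
        have : ms j * (2 * ms j - 1) + ms j * (2 * ms j + 1) = ms j * (4 * ms j) := by
          rw [← Nat.mul_add, h4]
        rw [this]; ring
    · rw [← Finset.sum_add_distrib]
      refine Finset.sum_congr rfl fun l _ => ?_
      ring
  have htri := tri k
  -- q = 1
  have hq1 : q = 1 := by omega
  subst hq1
  rcases show (t1 = 1 ∧ t2 = 0 ∧ t3 = 0) ∨ (t1 = 0 ∧ t2 = 1 ∧ t3 = 0) ∨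
      (t1 = 0 ∧ t2 = 0 ∧ t3 = 1) from by omega with ⟨e1, e2, e3⟩ | ⟨e1, e2, e3⟩ | ⟨e1, e2, e3⟩
  · subst e1; subst e2; subst e3
    refine ⟨rfl, rfl, rfl, rfl, fun i => ?_⟩
    simp only [Fin.sum_univ_one, Finset.univ_eq_empty, Finset.sum_empty, add_zero] at hsum
    have : i = 0 := Subsingleton.elim i 0
    subst this
    exact Nat.pow_left_injective (by norm_num) hsum
  · -- symplectic case: contradiction
    exfalso
    subst e1; subst e2; subst e3
    simp only [Fin.sum_univ_one, Finset.univ_eq_empty, Finset.sum_empty, add_zero,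
      zero_add] at hsum hdm
    have hm := hms 0
    have hk2 : k = 2 * ms 0 := (Nat.pow_left_injective (by norm_num) hsum).symm
    subst hk2
    set m := ms 0 with hmdef
    have hdiv : (2 * m) * (2 * m - 1) / 2 = m * (2 * m - 1) := by
      rw [Nat.mul_assoc, Nat.mul_div_cancel_left _ (by norm_num)]
    rw [hdiv] at h2
    have hle : m * (2 * m + 1) ≤ m * (2 * m - 1) := by omega
    have hexp : m * (2 * m + 1) = m * (2 * m - 1) + 2 * m := by
      have : 2 * m + 1 = (2 * m - 1) + 2 := by omega
      rw [this, Nat.mul_add]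
      omega
    omega
  · -- exchange case: contradiction
    exfalso
    subst e1; subst e2; subst e3
    simp only [Fin.sum_univ_one, Finset.univ_eq_empty, Finset.sum_empty, add_zero,
      zero_add] at hsum
    exact no_sqrt2 (hs 0) k (hhs 0) hsum
end
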